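/- Let a < b be integers, K : ℤ × ℤ → ℝ a kernel, f, g : ℤ → ℝ. Define (E_{a^+} f)(t) = ∑_{s=a+1}^{t} K(s,t) f(s), the right Caputo-type difference (ᴬᴮᶜ∇_b g)(t) = −∑_{s=t}^{b-1} K(t,s) (Δg)(s) with (Δg)(s) = g(s+1) − g(s), and the left Riemann–Liouville-type difference (ᴬᴮᴿₐ∇̂ f)(t) = (∇(E_{a^+} f))(t) with (∇h)(t) = h(t) − h(t−1). Then ∑_{t=a+1}^{b-1} f(t) · (ᴬᴮᶜ∇_b g)(t) = −[g(b)(E_{a^+} f)(b) − g(a+1)(E_{a^+} f)(a+1)] + ∑_{t=a+1}^{b-1} g(t+1) · (ᴬᴮᴿₐ∇̂ f)(t+1). -/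

import Mathlib

/-- Discrete left kernel operator `(E_{a^+} f)(t) = ∑_{s=a+1}^{t} K(s,t) f(s)`. -/
noncomputable def Eleft (K : ℤ × ℤ → ℝ) (a : ℤ) (f : ℤ → ℝ) (t : ℤ) : ℝ :=
  ∑ s ∈ Finset.Icc (a + 1) t, K (s, t) * f s

/-- Right Caputo-type AB difference with kernel `K`. -/
noncomputable def ABCright (K : ℤ × ℤ → ℝ) (b : ℤ) (g : ℤ → ℝ) (t : ℤ) : ℝ :=
  -∑ s ∈ Finset.Icc t (b - 1), K (t, s) * (g (s + 1) - g s)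

/-- Left Riemann–Liouville-type AB difference with kernel `K`. -/
noncomputable def ABRleft (K : ℤ × ℤ → ℝ) (a : ℤ) (f : ℤ → ℝ) (t : ℤ) : ℝ :=
  Eleft K a f t - Eleft K a f (t - 1)

/-!
Writing `E = E_{a^+} f`, the left-hand side is a double sum over `a < t ≤ s < b` of
`-f t K(t,s) Δg(s)`; summing over `t` first gives `-∑ Δg(s) E(s)`. Abel summation moves the
difference from `g` onto `E`, producing the boundary term `g E` at `b` and `a + 1` and the sum of
`g(s+1) ∇E(s+1)`.
-/

open Finset

namespace Finset

theorem sum_Icc_sum_Icc_comm {α M : Type*} [Preorder α] [LocallyFiniteOrder α] [AddCommMonoid M]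
    (m n : α) (F : α → α → M) :
    ∑ t ∈ Icc m n, ∑ s ∈ Icc t n, F t s = ∑ s ∈ Icc m n, ∑ t ∈ Icc m s, F t s :=
  sum_comm' fun t s => by
    simp only [mem_Icc]
    exact ⟨fun ⟨⟨hmt, _⟩, hts, hsn⟩ => ⟨⟨hmt, hts⟩, hmt.trans hts, hsn⟩,
      fun ⟨⟨hmt, hts⟩, _, hsn⟩ => ⟨⟨hmt, hts.trans hsn⟩, hts, hsn⟩⟩

theorem sum_Icc_int_sub {M : Type*} [AddCommGroup M] (u : ℤ → M) {m n : ℤ} (h : m ≤ n + 1) :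
    ∑ s ∈ Icc m n, (u (s + 1) - u s) = u (n + 1) - u m := by
  induction n, (by omega : m - 1 ≤ n) using Int.leInduction with
  | base => simp
  | succ n hn ih =>
    rw [Icc_eq_cons_Ico (by omega), sum_cons, ← Icc_sub_one_right_eq_Ico, add_sub_cancel_right,
      ih (by omega)]
    abel

theorem sum_Icc_int_by_parts {R : Type*} [CommRing R] (g E : ℤ → R) {m n : ℤ} (h : m ≤ n + 1) :
    ∑ s ∈ Icc m n, (g (s + 1) - g s) * E s
      = g (n + 1) * E (n + 1) - g m * E m - ∑ s ∈ Icc m n, g (s + 1) * (E (s + 1) - E s) := by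
  rw [← sum_Icc_int_sub (fun s => g s * E s) h, ← sum_sub_distrib]
  exact sum_congr rfl fun s _ => by ring

end Finset

theorem sum_mul_ABCright (K : ℤ × ℤ → ℝ) (a b : ℤ) (f g : ℤ → ℝ) :
    ∑ t ∈ Icc (a + 1) (b - 1), f t * ABCright K b g t
      = -∑ s ∈ Icc (a + 1) (b - 1), (g (s + 1) - g s) * Eleft K a f s := by
  simp only [ABCright, Eleft, mul_neg, sum_neg_distrib, mul_sum]
  rw [sum_Icc_sum_Icc_comm]
  exact congrArg _ <| sum_congr rfl fun s _ => sum_congr rfl fun t _ => by ring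

theorem ABRleft_add_one (K : ℤ × ℤ → ℝ) (a : ℤ) (f : ℤ → ℝ) (t : ℤ) :
    ABRleft K a f (t + 1) = Eleft K a f (t + 1) - Eleft K a f t := by
  rw [ABRleft, add_sub_cancel_right]

theorem ABC_right_ABR_left_by_parts
    (a b : ℤ) (hab : a < b) (K : ℤ × ℤ → ℝ) (f g : ℤ → ℝ) :
    ∑ t ∈ Finset.Icc (a + 1) (b - 1), f t * ABCright K b g t
    = -(g b * Eleft K a f b - g (a + 1) * Eleft K a f (a + 1))
      + ∑ t ∈ Finset.Icc (a + 1) (b - 1), g (t + 1) * ABRleft K a f (t + 1) := by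
  rw [sum_mul_ABCright, sum_Icc_int_by_parts _ _ (by omega), sub_add_cancel]
  simp only [ABRleft_add_one]
  ring
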